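/- Let C be a free semi-theory, P the initial semi-theory, and J_C : P → C the unique morphism of semi-theories. Then the left Kan extension functor (J_C)_* : SSet^P → SSet^C preserves objectwise monomorphisms and objectwise weak equivalences: if f : X → Y in SSet^P has each component a monomorphism (respectively, a weak equivalence of simplicial sets), then each component of (J_C)_* f is a monomorphism (respectively, a weak equivalence of simplicial sets). -/

import Mathlib

open CategoryTheory Limits Topology Topology.Homotopy

noncomputable section

namespace SemiThPaper

/-! ### Weak homotopy equivalences -/

/-- The map induced by a continuous map on homotopy "groups" (sets for `N = Fin 0`). -/
def HomotopyGroup.map {X Y : Type} [TopologicalSpace X] [TopologicalSpace Y]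
    (f : C(X, Y)) (N : Type) (x : X) :
    HomotopyGroup N X x → HomotopyGroup N Y (f x) :=
  Quotient.map
    (fun g => ⟨f.comp g.1, fun y hy => by
      simp only [ContinuousMap.comp_apply]
      rw [g.2 y hy]⟩)
    (fun g h H => H.elim fun H => ⟨H.compContinuousMap f⟩)

/-- The map induced on path components. -/
def ZerothHomotopy.map {X Y : Type} [TopologicalSpace X] [TopologicalSpace Y]
    (f : C(X, Y)) : ZerothHomotopy X → ZerothHomotopy Y :=
  Quotient.map f (fun _ _ h => h.elim fun γ => ⟨γ.map f.continuous⟩)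

/-- A weak homotopy equivalence of topological spaces: a continuous map inducing a
bijection on path components and on all homotopy groups at all basepoints. -/
def IsWeakHomotopyEquiv {X Y : TopCat} (f : X ⟶ Y) : Prop :=
  Function.Bijective (ZerothHomotopy.map (f.hom : C(X, Y))) ∧
    ∀ (n : ℕ) (x : X), Function.Bijective (HomotopyGroup.map (f.hom : C(X, Y)) (Fin n) x)

/-- A weak equivalence of simplicial sets: a map whose geometric realization is a
weak homotopy equivalence. -/
def WeakEquiv {A B : SSet} (f : A ⟶ B) : Prop :=
  IsWeakHomotopyEquiv (SSet.toTop.map f)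


/-! ### Semi-theories -/

/-- The objects `[1], [2], [3], …` of a semi-theory, indexed by positive integers. -/
@[ext]
structure Ob : Type where
  val : ℕ+

instance : Coe ℕ+ Ob := ⟨Ob.mk⟩

/-- An (unpointed) semi-theory: a category with objects `[1], [2], …`
together with distinguished projection morphisms `p^n_k : [n] ⟶ [1]`, where `p^1_1 = 𝟙 [1]`. -/
structure SemiTheory : Type 1 where
  cat : Category.{0, 0} Ob
  proj : ∀ n : ℕ+, Fin n → @Quiver.Hom Ob cat.toCategoryStruct.toQuiver ⟨n⟩ ⟨1⟩
  proj_one : proj 1 ⟨0, Nat.one_pos⟩ = cat.toCategoryStruct.id ⟨1⟩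

/-- The category of diagrams of simplicial sets over (the underlying category of)
a semi-theory. -/
abbrev SemiTheory.Diag (S : SemiTheory) : Type 1 :=
  @CategoryTheory.Functor Ob S.cat SSet _

/-- The `n`-fold levelwise power of a simplicial set. -/
@[simps]
def finPow (n : ℕ+) (A : SSet) : SSet where
  obj m := Fin n → A.obj m
  map θ := TypeCat.ofHom fun a k => A.map θ (a k)

/-- The canonical comparison map `X[n] ⟶ X[1]^n` of a diagram over a semi-theory,
whose components are induced by the projections. -/
def SemiTheory.projFan (S : SemiTheory) (X : S.Diag) (n : ℕ+) :
    (letI := S.cat; (X.obj ⟨n⟩ ⟶ finPow n (X.obj ⟨1⟩))) :=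
  letI := S.cat
  { app := fun m => TypeCat.ofHom fun a k => (X.map (S.proj n k)).app m a
    naturality := fun m m' θ => by
      apply ConcreteCategory.hom_ext; intro a
      funext k
      exact NatTrans.naturality_apply (X.map (S.proj n k)) θ a }

/-- A strict algebra over a semi-theory: the comparison maps `X[n] ⟶ X[1]^n` are
isomorphisms for all `n > 1`. -/
def SemiTheory.IsStrictAlgebra (S : SemiTheory) (X : S.Diag) : Prop :=
  ∀ n : ℕ+, 1 < (n : ℕ) → IsIso (S.projFan X n)

/-- A homotopy algebra over a semi-theory: the comparison maps `X[n] ⟶ X[1]^n` are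
weak equivalences of simplicial sets for all `n > 1`. -/
def SemiTheory.IsHomotopyAlgebra (S : SemiTheory) (X : S.Diag) : Prop :=
  ∀ n : ℕ+, 1 < (n : ℕ) → WeakEquiv (S.projFan X n)

/-- A semi-theory is an algebraic theory if composition with the projections induces
bijections `Hom([m],[n]) ≅ Hom([m],[1])^n` for all `m` and all `n > 1`. -/
def SemiTheory.IsAlgebraic (S : SemiTheory) : Prop :=
  letI := S.cat
  ∀ (m n : ℕ+), 1 < (n : ℕ) →
    Function.Bijective (fun (f : (⟨m⟩ : Ob) ⟶ ⟨n⟩) (k : Fin n) => f ≫ S.proj n k)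

/-- The comparison map `X[n] ⟶ X[1]^n` for a diagram of simplicial sets over any
category equipped with objects `[n]` and projection morphisms. -/
def projFanAt {C : Type} [Category.{0} C] (o : ℕ+ → C) (p : ∀ n : ℕ+, Fin n → (o n ⟶ o 1))
    (X : C ⥤ SSet) (n : ℕ+) : X.obj (o n) ⟶ finPow n (X.obj (o 1)) where
  app m := TypeCat.ofHom fun a k => (X.map (p n k)).app m a
  naturality m m' θ := by
    apply ConcreteCategory.hom_ext; intro a
    funext k
    exact NatTrans.naturality_apply (X.map (p n k)) θ a

/-- Strictness of a diagram with respect to given objects and projections. -/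
def IsStrictAt {C : Type} [Category.{0} C] (o : ℕ+ → C)
    (p : ∀ n : ℕ+, Fin n → (o n ⟶ o 1)) (X : C ⥤ SSet) : Prop :=
  ∀ n : ℕ+, 1 < (n : ℕ) → IsIso (projFanAt o p X n)

/-- The homotopy-algebra condition for a diagram with respect to given objects
and projections. -/
def IsHomotopyAt {C : Type} [Category.{0} C] (o : ℕ+ → C)
    (p : ∀ n : ℕ+, Fin n → (o n ⟶ o 1)) (X : C ⥤ SSet) : Prop :=
  ∀ n : ℕ+, 1 < (n : ℕ) → WeakEquiv (projFanAt o p X n)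

/-! ### Free semi-theories -/

/-- Generating data for a free semi-theory: a family of free generators that are
not projections (the projections are added separately as free generators). -/
structure GenData : Type 1 where
  gen : ℕ+ → ℕ+ → Type

/-- The generating quiver of the free semi-theory on `G`: the generators of `G`
together with projection arrows `p^n_k : [n] → [1]` for `n > 1`
(the projection `p^1_1` is the identity, i.e. the empty path). -/
inductive Arr (G : GenData) : ℕ+ → ℕ+ → Type
  | gen {a b : ℕ+} : G.gen a b → Arr G a b
  | proj {n : ℕ+} (h : 1 < (n : ℕ)) (k : Fin n) : Arr G n 1

/-- The object type of the free semi-theory on `G` (a copy of `Ob`). -/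
def FreeOb (G : GenData) : Type := Ob

instance freeQuiver (G : GenData) : Quiver (FreeOb G) :=
  ⟨fun a b => Arr G (Ob.val a) (Ob.val b)⟩

/-- The free semi-theory on `G`, as a category: the paths category on the
generating quiver. -/
abbrev FreeST (G : GenData) := CategoryTheory.Paths (FreeOb G)

/-- The object `[n]` of the free semi-theory. -/
def FreeST.of (G : GenData) (n : ℕ+) : FreeST G := (⟨n⟩ : Ob)

/-- The generating projection arrow, as an arrow of the generating quiver. -/
def projArr (G : GenData) {n : ℕ+} (h : 1 < (n : ℕ)) (k : Fin n) :
    @Quiver.Hom (FreeOb G) _ (FreeST.of G n) (FreeST.of G 1) := Arr.proj h k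

/-- The projection `p^n_k` in the free semi-theory. -/
def projPath (G : GenData) (n : ℕ+) (k : Fin n) : FreeST.of G n ⟶ FreeST.of G 1 :=
  if h : 1 < (n : ℕ) then (projArr G h k).toPath
  else eqToHom (congrArg (FreeST.of G)
    (PNat.coe_injective (by
      rw [PNat.one_coe]
      exact le_antisymm (not_lt.1 h) n.pos)))

/-- The free semi-theory on `G`, as a semi-theory. -/
def freeSemiTheory (G : GenData) : SemiTheory where
  cat := inferInstanceAs (Category (FreeST G))
  proj n k := projPath G n k
  proj_one := by
    show projPath G 1 ⟨0, Nat.one_pos⟩ = _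
    rw [projPath, dif_neg (by norm_num)]
    rfl

/-- The initial semi-theory `P` has no generators besides the projections. -/
def emptyGen : GenData := ⟨fun _ _ => PEmpty⟩

/-- The underlying category of the initial semi-theory `P`. -/
abbrev PCat := FreeST emptyGen

/-- The initial semi-theory `P`: its only non-identity morphisms are the projections. -/
def PTheory : SemiTheory := freeSemiTheory emptyGen

/-- The action of the unique morphism of semi-theories `P ⟶ C` on generating arrows. -/
def jArr (G : GenData) : ∀ {a b : ℕ+}, Arr emptyGen a b →
    @Quiver.Path (FreeOb G) _ ((⟨a⟩ : Ob) : FreeST G) ((⟨b⟩ : Ob) : FreeST G)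
  | _, _, .gen α => α.elim
  | _, _, .proj h k => (projArr G h k).toPath

/-- The unique morphism of semi-theories `P ⟶ C` into a free semi-theory. -/
def Jfree (G : GenData) : PCat ⥤ FreeST G :=
  Paths.lift
    { obj := fun n => (n : FreeST G)
      map := fun {a b} e => jArr G e }

/-! ### The completion of a free semi-theory -/

/-- Trees representing the morphisms `[n] ⟶ [1]` of the completion `C̄` of a free
semi-theory: either a single edge labelled by a projection `p^n_k`, or a tree whose
lowest edge is labelled by a component `α_i` of a non-projection generator
`α : [m] ⟶ [r]` and which is obtained by grafting `m` smaller trees. -/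
inductive CTree (G : GenData) (n : ℕ+) : Type
  | proj (k : Fin n) : CTree G n
  | node {m r : ℕ+} (α : G.gen m r) (i : Fin r) (ts : Fin m → CTree G n) : CTree G n

/-- Morphisms `[n] ⟶ [m]` in the completion: `m`-tuples of trees. -/
def CompHom (G : GenData) (n m : ℕ+) : Type := Fin m → CTree G n

/-- Grafting: substituting the trees `T k` for the initial edges labelled `p^m_k`. -/
def CTree.graft {G : GenData} {n m : ℕ+} : CTree G m → CompHom G n m → CTree G n
  | .proj k, T => T k
  | .node α i ts, T => .node α i (fun j => (ts j).graft T)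

/-- The identity of the completion. -/
def compId (G : GenData) (n : ℕ+) : CompHom G n n := fun k => .proj k

/-- Composition in the completion, by grafting. -/
def compComp {G : GenData} {a b c : ℕ+} (T : CompHom G a b) (S : CompHom G b c) :
    CompHom G a c :=
  fun j => (S j).graft T

theorem CTree.graft_id {G : GenData} {m : ℕ+} (t : CTree G m) :
    t.graft (compId G m) = t := by
  induction t with
  | proj k => rfl
  | node α i ts ih =>
      simp only [CTree.graft]
      congr 1
      funext j
      exact ih j

theorem CTree.graft_graft {G : GenData} {a b c : ℕ+} (s : CTree G c)
    (U : CompHom G b c) (T : CompHom G a b) :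
    (s.graft U).graft T = s.graft (compComp T U) := by
  induction s with
  | proj k => rfl
  | node α i ts ih =>
      simp only [CTree.graft]
      congr 1
      funext j
      exact ih j

/-- The object type of the completion (a copy of `Ob`). -/
def CompOb (G : GenData) : Type := Ob

/-- The completion `C̄` of a free semi-theory, as a category. -/
instance compCategory (G : GenData) : Category (CompOb G) where
  Hom n m := CompHom G (Ob.val n) (Ob.val m)
  id n := compId G _
  comp f g := compComp f g
  id_comp f := funext fun j => CTree.graft_id _
  comp_id f := rfl
  assoc f g h := funext fun j => (CTree.graft_graft _ _ _).symm

/-- The object `[n]` of the completion. -/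
def CompOb.of (G : GenData) (n : ℕ+) : CompOb G := (⟨n⟩ : Ob)

/-- The projection `p̂^n_k` of the completion: a single edge labelled `p^n_k`. -/
def compProj (G : GenData) (n : ℕ+) (k : Fin n) : CompOb.of G n ⟶ CompOb.of G 1 :=
  fun _ => .proj k

/-- The completion, as a semi-theory. -/
def compSemiTheory (G : GenData) : SemiTheory where
  cat := inferInstanceAs (Category (CompOb G))
  proj n k := compProj G n k
  proj_one := by
    funext i
    have h0 : i = ⟨0, Nat.one_pos⟩ := Fin.ext (Nat.lt_one_iff.mp i.isLt)
    rw [h0]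
    rfl

/-- The completion functor `Φ` on generating arrows. -/
def phiArr (G : GenData) : ∀ {a b : ℕ+}, Arr G a b → CompHom G a b
  | _, _, .gen α => fun i => .node α i (fun k => .proj k)
  | _, _, .proj _ k => fun _ => .proj k

/-- The completion functor `Φ_C : C ⟶ C̄` of a free semi-theory. -/
def phi (G : GenData) : FreeST G ⥤ CompOb G :=
  Paths.lift
    { obj := fun n => (n : CompOb G)
      map := fun {a b} e => phiArr G e }

/-! ### Discrete simplicial sets, products, mapping complexes -/

/-- The discrete simplicial set on a type. -/
@[simps]
def disc (A : Type) : SSet where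
  obj _ := A
  map _ := TypeCat.ofHom id

/-- The map of discrete simplicial sets induced by a function. -/
@[simps]
def disc.map {A B : Type} (f : A → B) : disc A ⟶ disc B where
  app _ := TypeCat.ofHom f

/-- The diagram of (discrete) simplicial sets corepresented by the object `[n]`
of a semi-theory. -/
def SemiTheory.corep (S : SemiTheory) (n : ℕ+) : S.Diag :=
  letI := S.cat
  { obj := fun m => disc ((⟨n⟩ : Ob) ⟶ m)
    map := fun f => disc.map (fun g => g ≫ f)
    map_id := fun m => by
      apply NatTrans.ext
      funext x; apply ConcreteCategory.hom_ext; intro g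
      show g ≫ 𝟙 m = g
      exact Category.comp_id (X := (⟨n⟩ : Ob)) g
    map_comp := fun f f' => by
      apply NatTrans.ext
      funext x; apply ConcreteCategory.hom_ext; intro g
      show g ≫ (_ ≫ _) = (g ≫ _) ≫ _
      exact (Category.assoc (W := (⟨n⟩ : Ob)) g _ _).symm }

/-- Levelwise product of two simplicial sets. -/
@[simps]
def mulC (A K : SSet) : SSet where
  obj m := A.obj m × K.obj m
  map θ := TypeCat.ofHom fun p => (A.map θ p.1, K.map θ p.2)
  map_id m := by apply ConcreteCategory.hom_ext; intro p; simp
  map_comp f g := by apply ConcreteCategory.hom_ext; intro p; simp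

/-- `f × id` on levelwise products. -/
@[simps]
def mulC.mapLeft {A B : SSet} (f : A ⟶ B) (K : SSet) : mulC A K ⟶ mulC B K where
  app m := TypeCat.ofHom fun p => (f.app m p.1, p.2)
  naturality m m' θ := by
    apply ConcreteCategory.hom_ext; intro p
    show (f.app m' (A.map θ p.1), K.map θ p.2) = (B.map θ (f.app m p.1), K.map θ p.2)
    rw [NatTrans.naturality_apply]

/-- `id × g` on levelwise products. -/
@[simps]
def mulC.mapRight (A : SSet) {K L : SSet} (g : K ⟶ L) : mulC A K ⟶ mulC A L where
  app m := TypeCat.ofHom fun p => (p.1, g.app m p.2)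
  naturality m m' θ := by
    apply ConcreteCategory.hom_ext; intro p
    show (A.map θ p.1, g.app m' (K.map θ p.2)) = (A.map θ p.1, L.map θ (g.app m p.2))
    rw [NatTrans.naturality_apply]

theorem mulC.mapRight_id (A K : SSet) : mulC.mapRight A (𝟙 K) = 𝟙 (mulC A K) := by
  apply NatTrans.ext; funext x; apply ConcreteCategory.hom_ext; intro p; rfl

theorem mulC.mapRight_comp (A : SSet) {K L M : SSet} (g : K ⟶ L) (h : L ⟶ M) :
    mulC.mapRight A (g ≫ h) = mulC.mapRight A g ≫ mulC.mapRight A h := by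
  apply NatTrans.ext; funext x; apply ConcreteCategory.hom_ext; intro p; rfl

/-- Naturality, in applied form. -/
theorem natApply {C : Type} [Category C] {X Y : C ⥤ SSet} (f : X ⟶ Y)
    {c c' : C} (φ : c ⟶ c') (x : SimplexCategoryᵒᵖ) (a : (X.obj c).obj x) :
    (f.app c').app x ((X.map φ).app x a) = (Y.map φ).app x ((f.app c).app x a) :=
  types_congr_hom (NatTrans.congr_app (f.naturality φ) x) a

/-- The objectwise product of a diagram of simplicial sets with a constant
simplicial set. -/
@[simps]
def prodConst {C : Type} [Category C] (X : C ⥤ SSet) (K : SSet) : C ⥤ SSet where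
  obj c := mulC (X.obj c) K
  map f := mulC.mapLeft (X.map f) K
  map_id c := by
    apply NatTrans.ext; funext x; apply ConcreteCategory.hom_ext; intro p
    show ((X.map (𝟙 c)).app x p.1, p.2) = p
    rw [X.map_id]
    rfl
  map_comp f g := by
    apply NatTrans.ext; funext x; apply ConcreteCategory.hom_ext; intro p
    show ((X.map (f ≫ g)).app x p.1, p.2) = _
    rw [X.map_comp]
    rfl

/-- Functoriality of `prodConst` in the diagram variable. -/
@[simps]
def prodConst.mapX {C : Type} [Category C] {X X' : C ⥤ SSet} (f : X ⟶ X') (K : SSet) :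
    prodConst X K ⟶ prodConst X' K where
  app c := mulC.mapLeft (f.app c) K
  naturality c c' φ := by
    apply NatTrans.ext; funext x; apply ConcreteCategory.hom_ext; intro p
    simp only [prodConst_obj, prodConst_map, NatTrans.comp_app, mulC.mapLeft_app,
      types_comp_apply]
    exact Prod.ext (natApply f φ x p.1) rfl

/-- Functoriality of `prodConst` in the constant variable. -/
@[simps]
def prodConst.mapK {C : Type} [Category C] (X : C ⥤ SSet) {K L : SSet} (g : K ⟶ L) :
    prodConst X K ⟶ prodConst X L where
  app c := mulC.mapRight (X.obj c) g
  naturality c c' φ := by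
    apply NatTrans.ext; funext x; apply ConcreteCategory.hom_ext; intro p
    rfl

theorem prodConst.mapK_id {C : Type} [Category C] (X : C ⥤ SSet) (K : SSet) :
    prodConst.mapK X (𝟙 K) = 𝟙 (prodConst X K) := by
  apply NatTrans.ext; funext c
  exact mulC.mapRight_id _ _

theorem prodConst.mapK_comp {C : Type} [Category C] (X : C ⥤ SSet) {K L M : SSet}
    (g : K ⟶ L) (h : L ⟶ M) :
    prodConst.mapK X (g ≫ h) = prodConst.mapK X g ≫ prodConst.mapK X h := by
  apply NatTrans.ext; funext c
  exact mulC.mapRight_comp _ _ _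

/-- The standard simplex `Δ[k]`, for `k : SimplexCategoryᵒᵖ`. -/
def stdS (k : SimplexCategoryᵒᵖ) : SSet := SSet.stdSimplex.obj k.unop

/-- Functoriality of the standard simplex (contravariantly in `SimplexCategoryᵒᵖ`). -/
def stdMap {k l : SimplexCategoryᵒᵖ} (θ : k ⟶ l) : stdS l ⟶ stdS k :=
  SSet.stdSimplex.map θ.unop

theorem stdMap_id (k : SimplexCategoryᵒᵖ) : stdMap (𝟙 k) = 𝟙 (stdS k) :=
  SSet.stdSimplex.map_id _

theorem stdMap_comp {k l m : SimplexCategoryᵒᵖ} (θ : k ⟶ l) (η : l ⟶ m) :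
    stdMap (θ ≫ η) = stdMap η ≫ stdMap θ :=
  SSet.stdSimplex.map_comp _ _

/-- The simplicial mapping complex of two diagrams of simplicial sets: its
`m`-simplices are the natural transformations `X × Δ[m] ⟶ Y`. -/
def MapCx {C : Type} [Category C] (X Y : C ⥤ SSet) : SSet where
  obj m := prodConst X (stdS m) ⟶ Y
  map {m m'} θ := TypeCat.ofHom fun t => prodConst.mapK X (stdMap θ) ≫ t
  map_id m := by
    apply ConcreteCategory.hom_ext; intro t
    simp [stdMap_id, prodConst.mapK_id]
  map_comp θ η := by
    apply ConcreteCategory.hom_ext; intro t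
    simp [stdMap_comp, prodConst.mapK_comp]

/-- Precomposition on mapping complexes. -/
def MapCx.pre {C : Type} [Category C] {X X' : C ⥤ SSet} (f : X' ⟶ X) (Y : C ⥤ SSet) :
    MapCx X Y ⟶ MapCx X' Y where
  app m := TypeCat.ofHom fun t => prodConst.mapX f (stdS m) ≫ t
  naturality m m' θ := by
    apply ConcreteCategory.hom_ext; intro t
    rfl

/-- Postcomposition on mapping complexes. -/
def MapCx.post {C : Type} [Category C] (X : C ⥤ SSet) {Y Y' : C ⥤ SSet} (g : Y ⟶ Y') :
    MapCx X Y ⟶ MapCx X Y' where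
  app m := TypeCat.ofHom fun t => t ≫ g
  naturality m m' θ := by
    apply ConcreteCategory.hom_ext; intro t
    rfl

/-- Restriction of mapping complexes along a functor. -/
def MapCx.whisk {C D : Type} [Category C] [Category D] (F : D ⥤ C) (X Y : C ⥤ SSet) :
    MapCx X Y ⟶ MapCx (F ⋙ X) (F ⋙ Y) where
  app m := TypeCat.ofHom fun t =>
    (show prodConst (F ⋙ X) (stdS m) ⟶ F ⋙ Y from CategoryTheory.Functor.whiskerLeft F t)
  naturality m m' θ := by
    apply ConcreteCategory.hom_ext; intro t
    rfl

/-- The simplicial mapping complex of two simplicial sets: its `m`-simplices are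
the maps `A × Δ[m] ⟶ B`. -/
def sMap (A B : SSet) : SSet where
  obj m := mulC A (stdS m) ⟶ B
  map {m m'} θ := TypeCat.ofHom fun t => mulC.mapRight A (stdMap θ) ≫ t
  map_id m := by
    apply ConcreteCategory.hom_ext; intro t
    simp [stdMap_id, mulC.mapRight_id]
  map_comp θ η := by
    apply ConcreteCategory.hom_ext; intro t
    simp [stdMap_comp, mulC.mapRight_comp]

/-- Precomposition on simplicial mapping complexes. -/
def sMap.pre {A A' : SSet} (f : A' ⟶ A) (B : SSet) : sMap A B ⟶ sMap A' B where
  app m := TypeCat.ofHom fun t => mulC.mapLeft f (stdS m) ≫ t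
  naturality m m' θ := by
    apply ConcreteCategory.hom_ext; intro t
    rfl

/-- Postcomposition on simplicial mapping complexes. -/
def sMap.post (A : SSet) {B B' : SSet} (g : B ⟶ B') : sMap A B ⟶ sMap A B' where
  app m := TypeCat.ofHom fun t => t ≫ g
  naturality m m' θ := by
    apply ConcreteCategory.hom_ext; intro t
    rfl

/-! ### Decompositions of morphisms of a free semi-theory -/

/-- Whether a generating arrow is a generator of `G` (as opposed to a projection). -/
def Arr.isGen {G : GenData} : ∀ {a b : ℕ+}, Arr G a b → Prop
  | _, _, .gen _ => True
  | _, _, .proj _ _ => False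

/-- A morphism `φ = α_k ∘ ⋯ ∘ α_1` of a free semi-theory (a path in the generating
quiver) starts with a non-projection: `α_1` is not a projection. -/
def startsNonProj {G : GenData} : ∀ {a b : FreeOb G}, Quiver.Path a b → Prop
  | _, _, .nil => False
  | _, _, .cons .nil e => Arr.isGen e
  | _, _, .cons (.cons p e') _ => startsNonProj (Quiver.Path.cons p e')

/-- The first `j` arrows of a path (together with their target). -/
def pathTake {V : Type} [Quiver.{1} V] {a : V} : ∀ {b : V}, Quiver.Path a b → ℕ → Σ c : V, Quiver.Path a c
  | _, .nil, _ => ⟨a, .nil⟩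
  | b, .cons p e, j => if j ≤ p.length then pathTake p j else ⟨b, .cons p e⟩

/-! ### The diagram `D̄_n` and its filtrations -/

/-- The `D`-diagram `D̄_n` with `D̄_n[m] = Hom_{D̄}([n],[m])`, where the `D`-action
is given by composition via the completion functor `Φ`. -/
def barDn (G : GenData) (n : ℕ+) : FreeST G ⥤ SSet where
  obj m := disc (CompOb.of G n ⟶ (phi G).obj m)
  map {a b} ψ := disc.map (fun T => T ≫ (phi G).map ψ)
  map_id a := by
    apply NatTrans.ext
    funext x; apply ConcreteCategory.hom_ext; intro T
    show T ≫ (phi G).map (𝟙 a) = T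
    rw [CategoryTheory.Functor.map_id]; exact Category.comp_id _
  map_comp {a b c} ψ ψ' := by
    apply NatTrans.ext
    funext x; apply ConcreteCategory.hom_ext; intro T
    show T ≫ (phi G).map (ψ ≫ ψ') = (T ≫ (phi G).map ψ) ≫ (phi G).map ψ'
    rw [CategoryTheory.Functor.map_comp]; exact (Category.assoc _ _ _).symm

/-- The filtration of `D̄_n` by sub-`D`-diagrams:
`D̄_n^0 = D_n` (the image of the corepresented diagram) and `D̄_n^{k+1}` is the
smallest sub-`D`-diagram containing all tuples of elements of `D̄_n^k[1]`. -/
def Filt (G : GenData) (n : ℕ+) : ℕ → ∀ m : ℕ+, Set (CompHom G n m)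
  | 0, m => {T | ∃ ψ : FreeST.of G n ⟶ FreeST.of G m, T = (phi G).map ψ}
  | k+1, m => {T | ∃ (m' : ℕ+) (S : CompHom G n m')
      (ψ : FreeST.of G m' ⟶ FreeST.of G m),
      (∀ j : Fin m', (fun _ : Fin 1 => S j) ∈ Filt G n k 1) ∧
        T = (S : CompOb.of G n ⟶ CompOb.of G m') ≫ (phi G).map ψ}

/-- The filtration of `D̄_n` by sub-`P`-diagrams: `sD̄_n^0 = D_n` and `sD̄_n^{k+1}` is
the smallest sub-`P`-diagram containing all tuples of elements of `D̄ₙ^k[1]`. -/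
def sFilt (G : GenData) (n : ℕ+) : ℕ → ∀ m : ℕ+, Set (CompHom G n m)
  | 0, m => Filt G n 0 m
  | k+1, m => {T | ∀ j : Fin m, (fun _ : Fin 1 => T j) ∈ Filt G n k 1}

theorem Filt.closed (G : GenData) (n : ℕ+) (k : ℕ) {a b : ℕ+}
    {T : CompOb.of G n ⟶ CompOb.of G a} (hT : T ∈ Filt G n k a)
    (ψ : FreeST.of G a ⟶ FreeST.of G b) : T ≫ (phi G).map ψ ∈ Filt G n k b := by
  cases k with
  | zero =>
      obtain ⟨ψ₀, rfl⟩ := hT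
      exact ⟨ψ₀ ≫ ψ, by rw [CategoryTheory.Functor.map_comp]; rfl⟩
  | succ k =>
      obtain ⟨m', S, ψ₁, hS, rfl⟩ := hT
      exact ⟨m', S, ψ₁ ≫ ψ, hS, by rw [CategoryTheory.Functor.map_comp]; exact Category.assoc _ _ _⟩

theorem phi_map_toPath (G : GenData) {a b : FreeOb G}
    (e : @Quiver.Hom (FreeOb G) _ a b) :
    (phi G).map e.toPath = phiArr G e :=
  Paths.lift_toPath _ _

theorem Filt.comp_proj (G : GenData) (n : ℕ+) (k : ℕ) {m : ℕ+} {T : CompHom G n m}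
    (hT : T ∈ Filt G n k m) (j : Fin m) : (fun _ : Fin 1 => T j) ∈ Filt G n k 1 := by
  by_cases h : 1 < (m : ℕ)
  · have hc := Filt.closed G n k hT (projPath G m j)
    have he : (T : CompOb.of G n ⟶ CompOb.of G m) ≫ (phi G).map (projPath G m j)
        = (fun _ : Fin 1 => T j) := by
      unfold projPath
      rw [dif_pos h]
      rw [phi_map_toPath G (projArr G h j)]
      rfl
    exact he ▸ hc
  · have hm : m = 1 := PNat.coe_injective (by
      rw [PNat.one_coe]
      exact le_antisymm (not_lt.1 h) m.pos)
    subst hm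
    have ht : (fun _ : Fin 1 => T j) = T := by
      funext i
      congr 1
      exact Fin.ext (by
        rw [Nat.lt_one_iff.mp i.isLt, Nat.lt_one_iff.mp j.isLt])
    rwa [ht]

theorem sFilt.closed_arr (G : GenData) (n : ℕ+) (k : ℕ) {c b : ℕ+}
    {T : CompHom G n c} (hT : T ∈ sFilt G n k c) (e : Arr emptyGen c b) :
    (T : CompOb.of G n ⟶ CompOb.of G c) ≫ (phi G).map (jArr G e) ∈ sFilt G n k b := by
  cases e with
  | gen α => exact α.elim
  | proj h j =>
      have h1 : (phi G).map (jArr G (Arr.proj h j)) = phiArr G (Arr.proj h j) := by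
        show (phi G).map (projArr G h j).toPath = _
        exact phi_map_toPath G _
      rw [h1]
      show (fun _ : Fin 1 => T j) ∈ sFilt G n k 1
      cases k with
      | zero => exact Filt.comp_proj G n 0 hT j
      | succ k' => intro i; exact hT j

theorem sFilt.closed (G : GenData) (n : ℕ+) (k : ℕ) {a b : PCat}
    {T : CompOb.of G n ⟶ CompOb.of G (Ob.val a)} (hT : T ∈ sFilt G n k (Ob.val a))
    (ψ : a ⟶ b) :
    T ≫ (phi G).map ((Jfree G).map ψ) ∈ sFilt G n k (Ob.val b) := by
  change @Quiver.Path (FreeOb emptyGen) _ a b at ψ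
  induction ψ with
  | nil => exact hT
  | cons p e ih =>
      have h1 : (phi G).map ((Jfree G).map (Quiver.Path.cons p e))
          = (phi G).map ((Jfree G).map p) ≫ (phi G).map (jArr G e) := by
        exact (congrArg (phi G).map (Paths.lift_cons (V := FreeOb emptyGen) _ p e)).trans ((phi G).map_comp _ _)
      have h4 := sFilt.closed_arr G n k ih e
      have h5 := (congrArg (T ≫ ·) h1).trans (Category.assoc _ _ _).symm
      exact h5 ▸ h4

/-- The sub-`D`-diagram `D̄_n^k` of `D̄_n`. -/
def FiltDiag (G : GenData) (n : ℕ+) (k : ℕ) : FreeST G ⥤ SSet where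
  obj m := disc (Filt G n k (Ob.val m))
  map {a b} ψ := disc.map (fun T => ⟨T.1 ≫ (phi G).map ψ, Filt.closed G n k T.2 ψ⟩)
  map_id a := by
    apply NatTrans.ext
    funext x; apply ConcreteCategory.hom_ext; intro T
    apply Subtype.ext
    show T.1 ≫ (phi G).map (𝟙 a) = T.1
    rw [CategoryTheory.Functor.map_id]; exact Category.comp_id _
  map_comp {a b c} ψ ψ' := by
    apply NatTrans.ext
    funext x; apply ConcreteCategory.hom_ext; intro T
    apply Subtype.ext
    show T.1 ≫ (phi G).map (ψ ≫ ψ') = (T.1 ≫ (phi G).map ψ) ≫ (phi G).map ψ'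
    rw [CategoryTheory.Functor.map_comp]; exact (Category.assoc _ _ _).symm

/-- The sub-`P`-diagram `sD̄_n^k` of `D̄_n`. -/
def sFiltDiag (G : GenData) (n : ℕ+) (k : ℕ) : PCat ⥤ SSet where
  obj m := disc (sFilt G n k (Ob.val m))
  map {a b} ψ := disc.map (fun T => ⟨T.1 ≫ (phi G).map ((Jfree G).map ψ),
    sFilt.closed G n k T.2 ψ⟩)
  map_id a := by
    apply NatTrans.ext
    funext x; apply ConcreteCategory.hom_ext; intro T
    apply Subtype.ext
    show T.1 ≫ (phi G).map ((Jfree G).map (𝟙 a)) = T.1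
    rw [CategoryTheory.Functor.map_id, CategoryTheory.Functor.map_id]; exact Category.comp_id _
  map_comp {a b c} ψ ψ' := by
    apply NatTrans.ext
    funext x; apply ConcreteCategory.hom_ext; intro T
    apply Subtype.ext
    show T.1 ≫ (phi G).map ((Jfree G).map (ψ ≫ ψ')) =
      (T.1 ≫ (phi G).map ((Jfree G).map ψ)) ≫ (phi G).map ((Jfree G).map ψ')
    rw [CategoryTheory.Functor.map_comp, CategoryTheory.Functor.map_comp]
    exact (Category.assoc _ _ _).symm


theorem Filt.mono (G : GenData) (n : ℕ+) (k : ℕ) (m : ℕ+) :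
    Filt G n k m ⊆ Filt G n (k+1) m := by
  intro T hT
  exact ⟨m, T, 𝟙 _, fun j => Filt.comp_proj G n k hT j,
    by rw [CategoryTheory.Functor.map_id]; exact (Category.comp_id (obj := CompOb G) _).symm⟩

theorem Filt.subset_sFilt (G : GenData) (n : ℕ+) (k : ℕ) (m : ℕ+) :
    Filt G n k m ⊆ sFilt G n (k+1) m :=
  fun _ hT j => Filt.comp_proj G n k hT j

theorem sFilt.subset_Filt (G : GenData) (n : ℕ+) (k : ℕ) (m : ℕ+) :
    sFilt G n (k+1) m ⊆ Filt G n (k+1) m := by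
  intro T hT
  exact ⟨m, T, 𝟙 _, hT, by rw [CategoryTheory.Functor.map_id]; exact (Category.comp_id (obj := CompOb G) _).symm⟩

/-- Restriction of a `D`-diagram to a `P`-diagram. -/
def resP (G : GenData) (X : FreeST G ⥤ SSet) : PCat ⥤ SSet := Jfree G ⋙ X

/-- The inclusion `D̄_n^k ⟶ D̄_n^{k+1}` of sub-`D`-diagrams. -/
def filtIncl (G : GenData) (n : ℕ+) (k : ℕ) : FiltDiag G n k ⟶ FiltDiag G n (k+1) where
  app m := disc.map (Set.inclusion (Filt.mono G n k (Ob.val m)))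
  naturality a b ψ := by
    apply NatTrans.ext
    funext x; apply ConcreteCategory.hom_ext; intro T
    apply Subtype.ext
    rfl

/-- The inclusion `D̄_n^k ⟶ sD̄_n^{k+1}` of sub-`P`-diagrams. -/
def filtInclS (G : GenData) (n : ℕ+) (k : ℕ) :
    resP G (FiltDiag G n k) ⟶ sFiltDiag G n (k+1) where
  app m := disc.map (Set.inclusion (Filt.subset_sFilt G n k (Ob.val m)))
  naturality a b ψ := by
    apply NatTrans.ext
    funext x; apply ConcreteCategory.hom_ext; intro T
    apply Subtype.ext
    rfl

/-- The inclusion `sD̄_n^{k+1} ⟶ D̄_n^{k+1}` of sub-`P`-diagrams. -/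
def sFiltIncl (G : GenData) (n : ℕ+) (k : ℕ) :
    sFiltDiag G n (k+1) ⟶ resP G (FiltDiag G n (k+1)) where
  app m := disc.map (Set.inclusion (sFilt.subset_Filt G n k (Ob.val m)))
  naturality a b ψ := by
    apply NatTrans.ext
    funext x; apply ConcreteCategory.hom_ext; intro T
    apply Subtype.ext
    rfl

/-!
Every morphism `χ : J[a] ⟶ c` of a free semi-theory factors uniquely as `J(g) ≫ ψ` with `g` an
identity or a projection of `P` and `ψ` not beginning with a projection: a leading projection of
`χ` can only come from `g`, and paths are cancellable. Hence `X ↦ (c ↦ ∐_ψ X[s])`, the coproduct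
running over these reduced arrows `ψ : J[s] ⟶ c`, is left adjoint to restriction along `J`, so it
is `J_*`, and `(J_* f)_c = ∐_ψ f_[s]`. A coproduct of monomorphisms of simplicial sets is a
monomorphism. Geometric realization preserves coproducts, and a disjoint union of weak homotopy
equivalences is one, because path components and homotopy groups of a disjoint union are computed
summandwise.
-/

section WeakHomotopyEquiv

theorem ZerothHomotopy.map_id (X : Type) [TopologicalSpace X] :
    ZerothHomotopy.map (ContinuousMap.id X) = id := by
  funext q
  induction q using Quotient.ind
  rfl

theorem ZerothHomotopy.map_comp {X Y Z : Type} [TopologicalSpace X] [TopologicalSpace Y]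
    [TopologicalSpace Z] (f : C(X, Y)) (g : C(Y, Z)) :
    ZerothHomotopy.map (g.comp f) = ZerothHomotopy.map g ∘ ZerothHomotopy.map f := by
  funext q
  induction q using Quotient.ind
  rfl

theorem HomotopyGroup.map_id {X : Type} [TopologicalSpace X] (N : Type) (x : X) :
    HomotopyGroup.map (ContinuousMap.id X) N x = id := by
  funext q
  induction q using Quotient.ind
  rfl

theorem HomotopyGroup.map_comp {X Y Z : Type} [TopologicalSpace X] [TopologicalSpace Y]
    [TopologicalSpace Z] (f : C(X, Y)) (g : C(Y, Z)) (N : Type) (x : X) :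
    HomotopyGroup.map (g.comp f) N x
      = HomotopyGroup.map g N (f x) ∘ HomotopyGroup.map f N x := by
  funext q
  induction q using Quotient.ind
  rfl

theorem ZerothHomotopy.map_bijective_of_inverse {X Y : Type} [TopologicalSpace X]
    [TopologicalSpace Y] {f : C(X, Y)} {g : C(Y, X)} (hgf : g.comp f = ContinuousMap.id X)
    (hfg : f.comp g = ContinuousMap.id Y) :
    Function.Bijective (ZerothHomotopy.map f) := by
  have hl : ZerothHomotopy.map g ∘ ZerothHomotopy.map f = id := by
    rw [← ZerothHomotopy.map_comp, hgf, ZerothHomotopy.map_id]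
  have hr : ZerothHomotopy.map f ∘ ZerothHomotopy.map g = id := by
    rw [← ZerothHomotopy.map_comp, hfg, ZerothHomotopy.map_id]
  exact Function.bijective_iff_has_inverse.2 ⟨_, congrFun hl, congrFun hr⟩

theorem HomotopyGroup.map_bijective_of_inverse {X Y : Type} [TopologicalSpace X]
    [TopologicalSpace Y] {f : C(X, Y)} {g : C(Y, X)} (hgf : g.comp f = ContinuousMap.id X)
    (hfg : f.comp g = ContinuousMap.id Y) (N : Type) (x : X) :
    Function.Bijective (HomotopyGroup.map f N x) := by
  constructor
  · intro a b hab
    have h : HomotopyGroup.map (g.comp f) N x a = HomotopyGroup.map (g.comp f) N x b := by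
      rw [HomotopyGroup.map_comp]
      exact congrArg (HomotopyGroup.map g N (f x)) hab
    rwa [hgf, HomotopyGroup.map_id] at h
  · have hsurj : Function.Surjective (HomotopyGroup.map (f.comp g) N (f x)) := by
      rw [hfg, HomotopyGroup.map_id]
      exact Function.surjective_id
    rw [HomotopyGroup.map_comp] at hsurj
    rw [← show g (f x) = x from DFunLike.congr_fun hgf x]
    exact hsurj.of_comp

theorem IsWeakHomotopyEquiv.comp {X Y Z : TopCat} {f : X ⟶ Y} {g : Y ⟶ Z}
    (hf : IsWeakHomotopyEquiv f) (hg : IsWeakHomotopyEquiv g) :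
    IsWeakHomotopyEquiv (f ≫ g) := by
  refine ⟨?_, fun n x => ?_⟩
  · rw [TopCat.hom_comp, ZerothHomotopy.map_comp]
    exact hg.1.comp hf.1
  · rw [TopCat.hom_comp, HomotopyGroup.map_comp]
    exact (hg.2 n (f x)).comp (hf.2 n x)

theorem IsWeakHomotopyEquiv.of_isIso {X Y : TopCat} (f : X ⟶ Y) [IsIso f] :
    IsWeakHomotopyEquiv f := by
  have hgf : (inv f).hom.comp f.hom = ContinuousMap.id X := by
    rw [← TopCat.hom_comp, IsIso.hom_inv_id, TopCat.hom_id]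
  have hfg : f.hom.comp (inv f).hom = ContinuousMap.id Y := by
    rw [← TopCat.hom_comp, IsIso.inv_hom_id, TopCat.hom_id]
  exact ⟨ZerothHomotopy.map_bijective_of_inverse hgf hfg,
    fun n x => HomotopyGroup.map_bijective_of_inverse hgf hfg (Fin n) x⟩

theorem WeakEquiv.comp {A B C : SSet} {f : A ⟶ B} {g : B ⟶ C} (hf : WeakEquiv f)
    (hg : WeakEquiv g) : WeakEquiv (f ≫ g) := by
  rw [WeakEquiv, Functor.map_comp]
  exact IsWeakHomotopyEquiv.comp hf hg

theorem WeakEquiv.of_isIso {A B : SSet} (f : A ⟶ B) [IsIso f] : WeakEquiv f :=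
  IsWeakHomotopyEquiv.of_isIso _

end WeakHomotopyEquiv

section Sigma

variable {ι : Type} {A B : ι → Type} [∀ i, TopologicalSpace (A i)] [∀ i, TopologicalSpace (B i)]

def ContinuousMap.sigmaMap (f : ∀ i, C(A i, B i)) : C(Σ i, A i, Σ i, B i) :=
  ⟨Sigma.map id fun i => f i, Continuous.sigma_map fun i => (f i).continuous⟩

theorem exists_eq_sigmaMk_comp {X : Type} [TopologicalSpace X] [ConnectedSpace X]
    (F : C(X, Σ i, A i)) {x₀ : X} {i : ι} (hx₀ : (F x₀).1 = i) :
    ∃ g : C(X, A i), F = (ContinuousMap.sigmaMk i).comp g := by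
  obtain ⟨k, g, rfl⟩ := F.exists_lift_sigma
  obtain rfl : k = i := hx₀
  exact ⟨g, rfl⟩

theorem Sigma.fst_eq_of_joined {i j : ι} {a : A i} {b : A j}
    (h : Joined (⟨i, a⟩ : Σ i, A i) ⟨j, b⟩) : i = j := by
  obtain ⟨γ⟩ := h
  obtain ⟨g, hg⟩ := exists_eq_sigmaMk_comp γ.toContinuousMap (x₀ := 0) (congrArg Sigma.fst γ.source)
  exact (congrArg Sigma.fst (γ.target.symm.trans (DFunLike.congr_fun hg 1))).symm

theorem Sigma.joined_mk_iff {i : ι} {a b : A i} :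
    Joined (⟨i, a⟩ : Σ i, A i) ⟨i, b⟩ ↔ Joined a b := by
  refine ⟨fun ⟨γ⟩ => ?_, fun h => h.map continuous_sigmaMk⟩
  obtain ⟨g, hg⟩ := exists_eq_sigmaMk_comp γ.toContinuousMap (x₀ := 0) (congrArg Sigma.fst γ.source)
  exact ⟨{ toContinuousMap := g
           source' := sigma_mk_injective ((DFunLike.congr_fun hg 0).symm.trans γ.source)
           target' := sigma_mk_injective ((DFunLike.congr_fun hg 1).symm.trans γ.target) }⟩

theorem ZerothHomotopy.map_sigmaMap_bijective (f : ∀ i, C(A i, B i))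
    (hf : ∀ i, Function.Bijective (ZerothHomotopy.map (f i))) :
    Function.Bijective (ZerothHomotopy.map (ContinuousMap.sigmaMap f)) := by
  constructor
  · rintro ⟨i, a⟩ ⟨j, b⟩ h
    have hj : Joined (⟨i, f i a⟩ : Σ i, B i) ⟨j, f j b⟩ := Quotient.exact h
    obtain rfl : i = j := Sigma.fst_eq_of_joined hj
    have hab : ZerothHomotopy.map (f i) ⟦a⟧ = ZerothHomotopy.map (f i) ⟦b⟧ :=
      Quotient.sound (Sigma.joined_mk_iff.1 hj)
    exact Quotient.sound (Sigma.joined_mk_iff.2 (Quotient.exact ((hf i).1 hab)))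
  · rintro ⟨j, b⟩
    obtain ⟨⟨a⟩, ha⟩ := (hf j).2 ⟦b⟧
    exact ⟨⟦⟨j, a⟩⟧, Quotient.sound (Sigma.joined_mk_iff.2 (Quotient.exact ha))⟩

theorem HomotopyGroup.map_sigmaMk_injective (N : Type) {i : ι} (a : A i) :
    Function.Injective (HomotopyGroup.map (ContinuousMap.sigmaMk (X := A) i) N a) := by
  rintro ⟨γ⟩ ⟨γ'⟩ h
  obtain ⟨H⟩ := Quotient.exact h
  obtain ⟨K, hK⟩ := exists_eq_sigmaMk_comp H.toContinuousMap (x₀ := (0, fun _ => 0))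
    (congrArg Sigma.fst (H.apply_zero _))
  have hKH : ∀ p, (⟨i, K p⟩ : Σ i, A i) = H p := fun p => (DFunLike.congr_fun hK p).symm
  exact Quotient.sound
    ⟨{ toContinuousMap := K
       map_zero_left := fun y => sigma_mk_injective ((hKH _).trans (H.apply_zero y))
       map_one_left := fun y => sigma_mk_injective ((hKH _).trans (H.apply_one y))
       prop' := fun t y hy => sigma_mk_injective ((hKH _).trans (H.eq_fst t hy)) }⟩

/-- Since `N` is nonempty, a generalized loop meets the boundary, where it sits in the
summand of the basepoint; by connectedness of the cube it stays there. -/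
theorem HomotopyGroup.map_sigmaMk_surjective (N : Type) [Nonempty N] {i : ι} (a : A i) :
    Function.Surjective (HomotopyGroup.map (ContinuousMap.sigmaMk (X := A) i) N a) := by
  rintro ⟨δ⟩
  have hy₀ : (fun _ => 0 : N → unitInterval) ∈ Cube.boundary N :=
    ⟨Classical.arbitrary N, Or.inl rfl⟩
  obtain ⟨g, hg⟩ := exists_eq_sigmaMk_comp δ.1 (congrArg Sigma.fst (δ.2 _ hy₀))
  have hbd : ∀ y ∈ Cube.boundary N, g y = a := fun y hy =>
    sigma_mk_injective ((DFunLike.congr_fun hg y).symm.trans (δ.2 y hy))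
  exact ⟨⟦⟨g, hbd⟩⟧, congrArg _ (Subtype.ext hg.symm)⟩

theorem HomotopyGroup.map_sigmaMk_bijective (N : Type) [Nonempty N] {i : ι} (a : A i) :
    Function.Bijective (HomotopyGroup.map (ContinuousMap.sigmaMk (X := A) i) N a) :=
  ⟨HomotopyGroup.map_sigmaMk_injective N a, HomotopyGroup.map_sigmaMk_surjective N a⟩

theorem HomotopyGroup.map_bijective_iff_of_isEmpty {X Y : Type} [TopologicalSpace X]
    [TopologicalSpace Y] (F : C(X, Y)) (N : Type) [IsEmpty N] (x : X) :
    Function.Bijective (HomotopyGroup.map F N x) ↔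
      Function.Bijective (ZerothHomotopy.map F) := by
  have hcomm : HomotopyGroup.map F N x =
      (homotopyGroupEquivZerothHomotopyOfIsEmpty N (F x)).symm ∘ ZerothHomotopy.map F ∘
        homotopyGroupEquivZerothHomotopyOfIsEmpty N x := by
    funext q
    rw [Function.comp_apply, Equiv.eq_symm_apply]
    induction q using Quotient.ind
    rfl
  rw [hcomm, Equiv.comp_bijective, Equiv.bijective_comp]

theorem HomotopyGroup.map_sigmaMap_bijective (f : ∀ i, C(A i, B i))
    (h₀ : ∀ i, Function.Bijective (ZerothHomotopy.map (f i))) (N : Type)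
    (hf : ∀ i (a : A i), Function.Bijective (HomotopyGroup.map (f i) N a)) (x : Σ i, A i) :
    Function.Bijective (HomotopyGroup.map (ContinuousMap.sigmaMap f) N x) := by
  rcases isEmpty_or_nonempty N with hN | hN
  · rw [HomotopyGroup.map_bijective_iff_of_isEmpty]
    exact ZerothHomotopy.map_sigmaMap_bijective f h₀
  obtain ⟨i, a⟩ := x
  have h : Function.Bijective (HomotopyGroup.map
      ((ContinuousMap.sigmaMap f).comp (ContinuousMap.sigmaMk i)) N a) := by
    change Function.Bijective (HomotopyGroup.map ((ContinuousMap.sigmaMk i).comp (f i)) N a)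
    rw [HomotopyGroup.map_comp]
    exact (HomotopyGroup.map_sigmaMk_bijective N (f i a)).comp (hf i a)
  rw [HomotopyGroup.map_comp] at h
  exact (Function.Bijective.of_comp_iff _ (HomotopyGroup.map_sigmaMk_bijective N a)).1 h

end Sigma

theorem IsWeakHomotopyEquiv.of_isColimit_cofan {ι : Type} {A B : ι → TopCat.{0}}
    {cA : Cofan A} {cB : Cofan B} (hA : IsColimit cA) (hB : IsColimit cB)
    (f : ∀ i, A i ⟶ B i) (φ : cA.pt ⟶ cB.pt) (hφ : ∀ i, cA.inj i ≫ φ = f i ≫ cB.inj i)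
    (hf : ∀ i, IsWeakHomotopyEquiv (f i)) : IsWeakHomotopyEquiv φ := by
  let eA := hA.coconePointUniqueUpToIso (TopCat.sigmaCofanIsColimit A)
  let eB := hB.coconePointUniqueUpToIso (TopCat.sigmaCofanIsColimit B)
  let σ : (TopCat.sigmaCofan A).pt ⟶ (TopCat.sigmaCofan B).pt :=
    TopCat.ofHom (ContinuousMap.sigmaMap fun i => (f i).hom)
  have hσ : IsWeakHomotopyEquiv σ :=
    ⟨ZerothHomotopy.map_sigmaMap_bijective _ fun i => (hf i).1,
      fun n => HomotopyGroup.map_sigmaMap_bijective _ (fun i => (hf i).1) (Fin n)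
        fun i => (hf i).2 n⟩
  have hφ' : φ = eA.hom ≫ σ ≫ eB.inv := by
    refine Cofan.IsColimit.hom_ext hA _ _ fun i => ?_
    have h₁ : cA.inj i ≫ eA.hom = TopCat.sigmaι A i :=
      hA.comp_coconePointUniqueUpToIso_hom _ ⟨i⟩
    have h₂ : TopCat.sigmaι B i ≫ eB.inv = cB.inj i :=
      hB.comp_coconePointUniqueUpToIso_inv _ ⟨i⟩
    rw [hφ, reassoc_of% h₁, ← h₂]
    rfl
  rw [hφ']
  exact (IsWeakHomotopyEquiv.of_isIso _).comp (hσ.comp (IsWeakHomotopyEquiv.of_isIso _))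

section SigmaSSet

variable {I : Type}

def sigmaSSet (A : I → SSet) : SSet where
  obj n := Σ i, (A i).obj n
  map θ := TypeCat.ofHom fun p => ⟨p.1, (A p.1).map θ p.2⟩
  map_id n := by
    apply ConcreteCategory.hom_ext
    rintro ⟨i, a⟩
    simp
  map_comp θ θ' := by
    apply ConcreteCategory.hom_ext
    rintro ⟨i, a⟩
    simp

namespace sigmaSSet

variable {A B : I → SSet}

def ι (A : I → SSet) (i : I) : A i ⟶ sigmaSSet A where
  app n := TypeCat.ofHom fun a => (⟨i, a⟩ : Σ i, (A i).obj n)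

def desc {Z : SSet} (g : ∀ i, A i ⟶ Z) : sigmaSSet A ⟶ Z where
  app n := TypeCat.ofHom fun p => (g p.1).app n p.2
  naturality n n' θ := by
    apply ConcreteCategory.hom_ext
    rintro ⟨i, a⟩
    exact NatTrans.naturality_apply (g i) θ a

@[simp]
theorem ι_desc {Z : SSet} (g : ∀ i, A i ⟶ Z) (i : I) : ι A i ≫ desc g = g i :=
  rfl

theorem hom_ext {Z : SSet} {u v : sigmaSSet A ⟶ Z} (h : ∀ i, ι A i ≫ u = ι A i ≫ v) :
    u = v := by
  ext n ⟨i, a⟩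
  exact ConcreteCategory.congr_hom (NatTrans.congr_app (h i) n) a

def map (f : ∀ i, A i ⟶ B i) : sigmaSSet A ⟶ sigmaSSet B where
  app n := TypeCat.ofHom fun p => ⟨p.1, (f p.1).app n p.2⟩
  naturality n n' θ := by
    apply ConcreteCategory.hom_ext
    rintro ⟨i, a⟩
    exact congrArg (Sigma.mk i) (NatTrans.naturality_apply (f i) θ a)

@[simp]
theorem ι_map (f : ∀ i, A i ⟶ B i) (i : I) : ι A i ≫ map f = f i ≫ ι B i :=
  rfl

def isColimit (A : I → SSet) : IsColimit (Cofan.mk (sigmaSSet A) (ι A)) :=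
  Cofan.IsColimit.mk _ (fun t => desc t.inj) (fun _ _ => rfl)
    (fun _ _ hm => hom_ext fun i => (hm i).trans rfl)

theorem mono_map {f : ∀ i, A i ⟶ B i} (hf : ∀ i, Mono (f i)) : Mono (map f) := by
  rw [NatTrans.mono_iff_mono_app]
  intro n
  rw [mono_iff_injective]
  rintro ⟨i, a⟩ ⟨j, b⟩ h
  change (⟨i, (f i).app n a⟩ : Σ i, (B i).obj n) = ⟨j, (f j).app n b⟩ at h
  obtain ⟨rfl, h⟩ := Sigma.mk.inj_iff.1 h
  have hinj : Function.Injective ((f i).app n) :=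
    (mono_iff_injective _).1 ((NatTrans.mono_iff_mono_app (f i)).1 (hf i) n)
  rw [hinj (eq_of_heq h)]

theorem weakEquiv_map {f : ∀ i, A i ⟶ B i} (hf : ∀ i, WeakEquiv (f i)) : WeakEquiv (map f) :=
  IsWeakHomotopyEquiv.of_isColimit_cofan
    (isColimitCofanMkObjOfIsColimit SSet.toTop _ _ (isColimit A))
    (isColimitCofanMkObjOfIsColimit SSet.toTop _ _ (isColimit B))
    (fun i => SSet.toTop.map (f i)) _
    (fun i => by simp only [Cofan.inj, Cofan.mk_ι_app, ← Functor.map_comp, ι_map]) hf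

end sigmaSSet

end SigmaSSet

theorem PCat.hom_induction {motive : ∀ {a s : PCat}, (a ⟶ s) → Prop}
    (id : ∀ a, motive (𝟙 a))
    (proj : ∀ {n : ℕ+} (h : 1 < (n : ℕ)) (k : Fin n), motive (projArr emptyGen h k).toPath) :
    ∀ {a s : PCat} (g : a ⟶ s), motive g
  | _, _, .nil => id _
  | ⟨_⟩, ⟨_⟩, .cons .nil (.proj h k) => proj h k
  | _, _, .cons .nil (.gen α) => α.elim
  | _, _, .cons (.cons _ (.gen α)) _ => α.elim
  | _, _, .cons (.cons _ (.proj _ _)) (.gen α) => α.elim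
  -- a second arrow would start at `[1]`, which is the source of no arrow of `P`
  | _, _, .cons (.cons _ (.proj _ _)) (.proj h _) => absurd h (lt_irrefl 1)

section ReducedFactorization

variable {G : GenData}

def StartsWithProj {a c : FreeST G} (ψ : a ⟶ c) : Prop :=
  ∃ (h : 1 < (Ob.val a : ℕ)) (k : Fin (Ob.val a)) (ρ : FreeST.of G 1 ⟶ c),
    ψ = (projArr G h k).toPath ≫ ρ

theorem not_startsWithProj_id (a : FreeST G) : ¬ StartsWithProj (𝟙 a) := by
  rintro ⟨h, k, ρ, hρ⟩
  have := (congrArg Quiver.Path.length hρ).trans (Quiver.Path.length_comp _ ρ)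
  change 0 = 1 + ρ.length at this
  omega

theorem not_startsWithProj_of_src_eq_one {c : FreeST G} (ψ : FreeST.of G 1 ⟶ c) :
    ¬ StartsWithProj ψ :=
  fun ⟨h, _⟩ => lt_irrefl 1 h

theorem projArr_toPath_comp_inj {a c : FreeST G} {h : 1 < (Ob.val a : ℕ)} {k k' : Fin (Ob.val a)}
    {ρ ρ' : FreeST.of G 1 ⟶ c}
    (e : (projArr G h k).toPath ≫ ρ = (projArr G h k').toPath ≫ ρ') : k = k' ∧ ρ = ρ' := by
  obtain ⟨hk, rfl⟩ := (Quiver.Path.comp_inj' (p₁ := (projArr G h k).toPath)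
    (p₂ := (projArr G h k').toPath) rfl).1 e
  refine ⟨?_, rfl⟩
  injection hk with _ _ _ hk
  injection hk

theorem Jfree_map_proj {n : ℕ+} (h : 1 < (n : ℕ)) (k : Fin n) :
    (Jfree G).map (projArr emptyGen h k).toPath = (projArr G h k).toPath :=
  Paths.lift_toPath _ _

variable (G) in
structure ReducedArrow (c : FreeST G) where
  src : PCat
  hom : (Jfree G).obj src ⟶ c
  not_startsWithProj : ¬ StartsWithProj hom

structure ReducedFactorization {a : PCat} {c : FreeST G} (χ : (Jfree G).obj a ⟶ c)
    extends ReducedArrow G c where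
  fst : a ⟶ src
  fac : (Jfree G).map fst ≫ hom = χ

def ReducedFactorization.ofNotStartsWithProj {a : PCat} {c : FreeST G}
    {χ : (Jfree G).obj a ⟶ c} (hχ : ¬ StartsWithProj χ) : ReducedFactorization χ :=
  ⟨⟨a, χ, hχ⟩, 𝟙 a, by rw [CategoryTheory.Functor.map_id, Category.id_comp]⟩

def ReducedFactorization.ofProjComp {a : PCat} {c : FreeST G} (h : 1 < (Ob.val a : ℕ))
    (k : Fin (Ob.val a)) (ρ : FreeST.of G 1 ⟶ c) :
    ReducedFactorization ((projArr G h k).toPath ≫ ρ : (Jfree G).obj a ⟶ c) :=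
  ⟨⟨FreeST.of emptyGen 1, ρ, not_startsWithProj_of_src_eq_one ρ⟩, (projArr emptyGen h k).toPath,
    congrArg (· ≫ ρ) (Jfree_map_proj h k)⟩

theorem ReducedFactorization.eq_ofNotStartsWithProj {a : PCat} {c : FreeST G}
    {χ : (Jfree G).obj a ⟶ c} (hχ : ¬ StartsWithProj χ) (d : ReducedFactorization χ) :
    d = ofNotStartsWithProj hχ := by
  obtain ⟨⟨s, ψ, hψ⟩, g, hfac⟩ := d
  change a ⟶ s at g
  induction g using PCat.hom_induction with
  | id a =>
    rw [CategoryTheory.Functor.map_id, Category.id_comp] at hfac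
    subst hfac
    rfl
  | proj h k =>
    rw [Jfree_map_proj] at hfac
    exact absurd ⟨h, k, ψ, hfac.symm⟩ hχ

theorem ReducedFactorization.eq_ofProjComp {a : PCat} {c : FreeST G} (h : 1 < (Ob.val a : ℕ))
    (k : Fin (Ob.val a)) (ρ : FreeST.of G 1 ⟶ c)
    (d : ReducedFactorization ((projArr G h k).toPath ≫ ρ : (Jfree G).obj a ⟶ c)) :
    d = ofProjComp h k ρ := by
  obtain ⟨⟨s, ψ, hψ⟩, g, hfac⟩ := d
  change a ⟶ s at g
  induction g using PCat.hom_induction with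
  | id a =>
    rw [CategoryTheory.Functor.map_id, Category.id_comp] at hfac
    exact absurd ⟨h, k, ρ, hfac⟩ hψ
  | proj h' k' =>
    rw [Jfree_map_proj] at hfac
    obtain ⟨rfl, rfl⟩ := projArr_toPath_comp_inj hfac
    rfl

instance {a : PCat} {c : FreeST G} (χ : (Jfree G).obj a ⟶ c) :
    Subsingleton (ReducedFactorization χ) := by
  by_cases hχ : StartsWithProj χ
  · obtain ⟨h, k, ρ, rfl⟩ := hχ
    exact ⟨fun d d' => (d.eq_ofProjComp h k ρ).trans (d'.eq_ofProjComp h k ρ).symm⟩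
  · exact ⟨fun d d' => (d.eq_ofNotStartsWithProj hχ).trans (d'.eq_ofNotStartsWithProj hχ).symm⟩

instance {a : PCat} {c : FreeST G} (χ : (Jfree G).obj a ⟶ c) :
    Nonempty (ReducedFactorization χ) := by
  by_cases hχ : StartsWithProj χ
  · obtain ⟨h, k, ρ, rfl⟩ := hχ
    exact ⟨.ofProjComp h k ρ⟩
  · exact ⟨.ofNotStartsWithProj hχ⟩

end ReducedFactorization

section LeftKanExtension

variable {G : GenData}

abbrev lanObj (X : PCat ⥤ SSet) (c : FreeST G) : SSet :=
  sigmaSSet fun r : ReducedArrow G c => X.obj r.src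

abbrev lanObj.ι (X : PCat ⥤ SSet) {c : FreeST G} (r : ReducedArrow G c) :
    X.obj r.src ⟶ lanObj X c :=
  sigmaSSet.ι (fun r : ReducedArrow G c => X.obj r.src) r

def lanMap (X : PCat ⥤ SSet) {c c' : FreeST G} (φ : c ⟶ c') : lanObj X c ⟶ lanObj X c' :=
  sigmaSSet.desc fun r =>
    let d := Classical.arbitrary (ReducedFactorization (r.hom ≫ φ))
    X.map d.fst ≫ lanObj.ι X d.toReducedArrow

theorem ι_lanMap (X : PCat ⥤ SSet) {c c' : FreeST G} (φ : c ⟶ c') (r : ReducedArrow G c)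
    (d : ReducedFactorization (r.hom ≫ φ)) :
    lanObj.ι X r ≫ lanMap X φ = X.map d.fst ≫ lanObj.ι X d.toReducedArrow := by
  rw [Subsingleton.elim d (Classical.arbitrary _)]
  exact sigmaSSet.ι_desc _ r

abbrev ReducedArrow.id (a : PCat) : ReducedArrow G ((Jfree G).obj a) :=
  ⟨a, 𝟙 _, not_startsWithProj_id _⟩

def lanFunctorObj (X : PCat ⥤ SSet) : FreeST G ⥤ SSet where
  obj := lanObj X
  map := lanMap X
  map_id c := sigmaSSet.hom_ext fun r => by
    rw [ι_lanMap X (𝟙 c) r ⟨r, 𝟙 _, by simp⟩]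
    dsimp only
    rw [X.map_id, Category.id_comp, Category.comp_id]
  map_comp {c c' c''} φ φ' := sigmaSSet.hom_ext fun r => by
    let d₁ := Classical.arbitrary (ReducedFactorization (r.hom ≫ φ))
    let d₂ := Classical.arbitrary (ReducedFactorization (d₁.hom ≫ φ'))
    have fac : (Jfree G).map (d₁.fst ≫ d₂.fst) ≫ d₂.hom = r.hom ≫ φ ≫ φ' := by
      rw [CategoryTheory.Functor.map_comp, Category.assoc, d₂.fac, ← Category.assoc, d₁.fac,
        Category.assoc]
    rw [ι_lanMap X (φ ≫ φ') r ⟨d₂.toReducedArrow, d₁.fst ≫ d₂.fst, fac⟩,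
      reassoc_of% (ι_lanMap X φ r d₁), ι_lanMap X φ' d₁.toReducedArrow d₂]
    dsimp only
    rw [X.map_comp, Category.assoc]

variable (G)

def lanFunctor : (PCat ⥤ SSet) ⥤ (FreeST G ⥤ SSet) where
  obj := lanFunctorObj
  map f :=
    { app c := sigmaSSet.map fun r => f.app r.src
      naturality c c' φ := sigmaSSet.hom_ext fun r => by
        let d := Classical.arbitrary (ReducedFactorization (r.hom ≫ φ))
        change lanObj.ι _ r ≫ lanMap _ φ ≫ _ = lanObj.ι _ r ≫ _ ≫ lanMap _ φ
        rw [reassoc_of% (ι_lanMap _ φ r d), reassoc_of% (sigmaSSet.ι_map _ r), ι_lanMap _ φ r d,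
          sigmaSSet.ι_map, NatTrans.naturality_assoc] }

def lanUnit : 𝟭 (PCat ⥤ SSet) ⟶ lanFunctor G ⋙ (Functor.whiskeringLeft _ _ _).obj (Jfree G) where
  app X :=
    { app a := lanObj.ι X (ReducedArrow.id a)
      naturality a b g := by
        change X.map g ≫ lanObj.ι X (ReducedArrow.id b) =
          lanObj.ι X (ReducedArrow.id a) ≫ lanMap X ((Jfree G).map g)
        rw [ι_lanMap X _ _ ⟨ReducedArrow.id b, g, by simp⟩] }

def lanCounit :
    (Functor.whiskeringLeft _ _ _).obj (Jfree G) ⋙ lanFunctor G ⟶ 𝟭 (FreeST G ⥤ SSet) where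
  app Z :=
    { app c := sigmaSSet.desc fun r => Z.map r.hom
      naturality c c' φ := sigmaSSet.hom_ext fun r => by
        let d := Classical.arbitrary (ReducedFactorization (r.hom ≫ φ))
        change lanObj.ι (Jfree G ⋙ Z) r ≫ lanMap _ φ ≫ sigmaSSet.desc (fun r => Z.map r.hom) =
          lanObj.ι (Jfree G ⋙ Z) r ≫ sigmaSSet.desc (fun r => Z.map r.hom) ≫ Z.map φ
        rw [reassoc_of% (ι_lanMap _ φ r d), sigmaSSet.ι_desc, reassoc_of% (sigmaSSet.ι_desc _ r),
          Functor.comp_map, ← Z.map_comp, ← Z.map_comp, d.fac] }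
  naturality Z Z' t := by
    ext c : 2
    refine sigmaSSet.hom_ext fun r => ?_
    change lanObj.ι (Jfree G ⋙ Z) r ≫ sigmaSSet.map (fun r => t.app ((Jfree G).obj r.src)) ≫
        sigmaSSet.desc (fun r => Z'.map r.hom) =
      lanObj.ι (Jfree G ⋙ Z) r ≫ sigmaSSet.desc (fun r => Z.map r.hom) ≫ t.app c
    rw [reassoc_of% (sigmaSSet.ι_map _ r), sigmaSSet.ι_desc, reassoc_of% (sigmaSSet.ι_desc _ r),
      t.naturality]

def lanAdjunction : lanFunctor G ⊣ (Functor.whiskeringLeft _ _ _).obj (Jfree G) where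
  unit := lanUnit G
  counit := lanCounit G
  left_triangle_components X := by
    ext c : 2
    refine sigmaSSet.hom_ext fun r => ?_
    change lanObj.ι X r ≫ sigmaSSet.map (fun r => lanObj.ι X (ReducedArrow.id r.src)) ≫
        sigmaSSet.desc (fun r => lanMap X r.hom) = lanObj.ι X r ≫ 𝟙 _
    rw [reassoc_of% (sigmaSSet.ι_map _ r), sigmaSSet.ι_desc,
      ι_lanMap X r.hom (ReducedArrow.id r.src) ⟨r, 𝟙 _, by simp⟩]
    dsimp only
    rw [X.map_id, Category.id_comp, Category.comp_id]
  right_triangle_components Z := by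
    ext a : 2
    change lanObj.ι (Jfree G ⋙ Z) (ReducedArrow.id a) ≫ sigmaSSet.desc (fun r => Z.map r.hom) =
      𝟙 _
    rw [sigmaSSet.ι_desc]
    exact Z.map_id _

def lanIso : lanFunctor G ≅ (Jfree G).lan :=
  (lanAdjunction G).leftAdjointUniq ((Jfree G).lanAdjunction SSet)

variable {G}

theorem lan_map_app {X Y : PCat ⥤ SSet} (f : X ⟶ Y) (c : FreeST G) :
    ((Jfree G).lan.map f).app c =
      (((lanIso G).app X).app c).inv ≫ ((lanFunctor G).map f).app c ≫
        (((lanIso G).app Y).app c).hom := by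
  rw [← NatIso.naturality_1 (lanIso G) f]
  rfl

theorem mono_lanFunctor_map_app {X Y : PCat ⥤ SSet} {f : X ⟶ Y} (hf : ∀ a, Mono (f.app a))
    (c : FreeST G) : Mono (((lanFunctor G).map f).app c) :=
  sigmaSSet.mono_map fun r : ReducedArrow G c => hf r.src

theorem weakEquiv_lanFunctor_map_app {X Y : PCat ⥤ SSet} {f : X ⟶ Y}
    (hf : ∀ a, WeakEquiv (f.app a)) (c : FreeST G) : WeakEquiv (((lanFunctor G).map f).app c) :=
  sigmaSSet.weakEquiv_map fun r : ReducedArrow G c => hf r.src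

end LeftKanExtension

theorem lan_along_J_preserves_cofibrations_and_weak_equivalences (G : GenData)
    {X Y : PCat ⥤ SSet} (f : X ⟶ Y) :
    ((∀ a : PCat, Mono (f.app a)) →
      ∀ c : FreeST G, Mono (((Jfree G).lan.map f).app c)) ∧
    ((∀ a : PCat, WeakEquiv (f.app a)) →
      ∀ c : FreeST G, WeakEquiv (((Jfree G).lan.map f).app c)) := by
  refine ⟨fun hm c => ?_, fun hw c => ?_⟩
  · have := mono_lanFunctor_map_app hm c
    rw [lan_map_app]
    infer_instance
  · rw [lan_map_app]
    exact (WeakEquiv.of_isIso _).comp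
      ((weakEquiv_lanFunctor_map_app hw c).comp (WeakEquiv.of_isIso _))

end SemiThPaper
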